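/- Let λ ∈ ℂ, ρ > 1, M ≥ 0, and let f : ℂ → ℂ be analytic on the closed disk {z ∈ ℂ : |z − λ| ≤ ρ} with |f(z)| ≤ M for all z in that disk. Let R ≥ 1 and let ζ = exp(2πi/R). Then | (1/R)·Σ_{j=0}^{R−1} f(λ + ζʲ) − f(λ) | ≤ M/(ρᴿ − 1). In particular, the average of f over the R-th roots of unity shifted by λ converges to f(λ) exponentially fast as R → ∞. -/

import Mathlib

/-!
Expand `f` in its Taylor series `f (z₀ + w) = ∑ aₙ wⁿ`, valid for `‖w‖ < ρ`. Averaging over the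
`R`-th roots of unity annihilates every monomial `wⁿ` with `R ∤ n` and fixes the others, so the
average equals `∑ₘ a_{Rm}` and the error is the aliasing tail `∑_{m ≥ 1} a_{Rm}`. Cauchy's estimate
`‖aₙ‖ ≤ M / ρⁿ` bounds this tail by the geometric series `M ∑_{m ≥ 1} ρ^{-Rm} = M / (ρᴿ - 1)`.
-/

open Complex

open Finset
open scoped Nat

namespace IsPrimitiveRoot

theorem sum_range_pow_pow {K : Type*} [CommRing K] [IsDomain K] {ζ : K} {k : ℕ}
    (hζ : IsPrimitiveRoot ζ k) (n : ℕ) :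
    ∑ j ∈ range k, (ζ ^ j) ^ n = if k ∣ n then (k : K) else 0 := by
  simp_rw [← pow_mul, mul_comm _ n, pow_mul]
  split_ifs with h
  · simp [(hζ.pow_eq_one_iff_dvd n).2 h]
  · have hne : ζ ^ n - 1 ≠ 0 := sub_ne_zero.2 fun h1 => h ((hζ.pow_eq_one_iff_dvd n).1 h1)
    have hpow : (ζ ^ n) ^ k = 1 := by rw [← pow_mul, mul_comm, pow_mul, hζ.pow_eq_one, one_pow]
    have hgeom := geom_sum_mul (ζ ^ n) k
    rw [hpow, sub_self] at hgeom
    exact (mul_eq_zero.1 hgeom).resolve_right hne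

theorem hasSum_mul_of_hasSum_pow_smul {K E : Type*} [Field K] [CharZero K] [AddCommGroup E]
    [Module K E] [TopologicalSpace E] [ContinuousAdd E] [ContinuousConstSMul K E]
    {ζ : K} {k : ℕ} (hζ : IsPrimitiveRoot ζ k) (hk : k ≠ 0) {a F : ℕ → E}
    (hF : ∀ j, HasSum (fun n => (ζ ^ j) ^ n • a n) (F j)) :
    HasSum (fun m => a (k * m)) ((k : K)⁻¹ • ∑ j ∈ range k, F j) := by
  have hmean := (hasSum_sum (s := range k) fun j _ => hF j).const_smul (k : K)⁻¹
  have hterm : ∀ n, (k : K)⁻¹ • ∑ j ∈ range k, (ζ ^ j) ^ n • a n = if k ∣ n then a n else 0 := by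
    intro n
    rw [← sum_smul, hζ.sum_range_pow_pow]
    split_ifs <;> simp [smul_smul, hk]
  simp only [hterm] at hmean
  have hsub := ((mul_right_injective₀ hk).hasSum_iff (f := fun n => if k ∣ n then a n else 0)
    fun n hn => if_neg fun ⟨m, hm⟩ => hn ⟨m, hm.symm⟩).2 hmean
  simpa [Function.comp_def] using hsub

end IsPrimitiveRoot

namespace Complex

variable {E : Type*} [NormedAddCommGroup E] [NormedSpace ℂ E]

noncomputable def taylorCoeff (f : ℂ → E) (c : ℂ) (n : ℕ) : E :=
  (n ! : ℂ)⁻¹ • iteratedDeriv n f c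

@[simp]
theorem taylorCoeff_zero (f : ℂ → E) (c : ℂ) : taylorCoeff f c 0 = f c := by
  simp [taylorCoeff]

theorem hasSum_taylorCoeff_smul [CompleteSpace E] {f : ℂ → E} {c w : ℂ} {r : ℝ}
    (hf : DifferentiableOn ℂ f (Metric.ball c r)) (hw : ‖w‖ < r) :
    HasSum (fun n => w ^ n • taylorCoeff f c n) (f (c + w)) := by
  have hmem : c + w ∈ Metric.ball c r := by simpa using hw
  simpa only [taylorCoeff, add_sub_cancel_left, smul_comm _ (w ^ _)] using
    hasSum_taylorSeries_on_ball hf hmem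

theorem norm_taylorCoeff_le [CompleteSpace E] {f : ℂ → E} {c : ℂ} {r M : ℝ} (hr : 0 < r)
    (hf : DiffContOnCl ℂ f (Metric.ball c r)) (hM : ∀ z ∈ Metric.sphere c r, ‖f z‖ ≤ M)
    (n : ℕ) : ‖taylorCoeff f c n‖ ≤ M / r ^ n := by
  have hn : (0 : ℝ) < n ! := mod_cast n.factorial_pos
  calc ‖taylorCoeff f c n‖ = (n ! : ℝ)⁻¹ * ‖iteratedDeriv n f c‖ := by
        rw [taylorCoeff, norm_smul, norm_inv, norm_natCast]
    _ ≤ (n ! : ℝ)⁻¹ * (n ! * M / r ^ n) := by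
        gcongr
        exact norm_iteratedDeriv_le_of_forall_mem_sphere_norm_le n hr hf hM
    _ = M / r ^ n := by field_simp

end Complex

theorem hasSum_inv_pow_succ {q : ℝ} (hq : 1 < q) :
    HasSum (fun m : ℕ => (q ^ (m + 1))⁻¹) (q - 1)⁻¹ := by
  have hq0 : 0 < q := by linarith
  have hgeom := (hasSum_geometric_of_lt_one (inv_nonneg.2 hq0.le)
    (inv_lt_one_of_one_lt₀ hq)).mul_left q⁻¹
  have hterm : (fun m : ℕ => (q ^ (m + 1))⁻¹) = fun m => q⁻¹ * q⁻¹ ^ m :=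
    funext fun m => by rw [pow_succ', mul_inv, inv_pow]
  have hvalue : (q - 1)⁻¹ = q⁻¹ * (1 - q⁻¹)⁻¹ := by field_simp
  rwa [hterm, hvalue]

theorem stmt_13_general (z₀ : ℂ) (ρ : ℝ) (hρ : 1 < ρ) (M : ℝ)
    (f : ℂ → ℂ)
    (hf : ∀ z ∈ Metric.closedBall z₀ ρ, AnalyticAt ℂ f z)
    (hbound : ∀ z ∈ Metric.closedBall z₀ ρ, ‖f z‖ ≤ M)
    (R : ℕ) (hR : 1 ≤ R) :
    let ζ : ℂ := Complex.exp (2 * Real.pi * Complex.I / R)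
    ‖(1 / (R : ℂ)) * (∑ j ∈ Finset.range R, f (z₀ + ζ ^ j)) - f z₀‖ ≤ M / (ρ ^ R - 1) := by
  intro ζ
  have hR0 : R ≠ 0 := by omega
  have hζ : IsPrimitiveRoot ζ R := isPrimitiveRoot_exp R hR0
  have hdiff : DifferentiableOn ℂ f (Metric.closedBall z₀ ρ) := fun z hz =>
    (hf z hz).differentiableAt.differentiableWithinAt
  have hmean := hζ.hasSum_mul_of_hasSum_pow_smul hR0 fun j =>
    hasSum_taylorCoeff_smul (hdiff.mono Metric.ball_subset_closedBall)
      (by rw [norm_pow, hζ.norm'_eq_one hR0, one_pow]; exact hρ)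
  have herror : HasSum (fun m => taylorCoeff f z₀ (R * (m + 1)))
      ((1 / (R : ℂ)) * (∑ j ∈ Finset.range R, f (z₀ + ζ ^ j)) - f z₀) := by
    simpa [smul_eq_mul] using (hasSum_nat_add_iff' 1).2 hmean
  have hcoeff : ∀ n, ‖taylorCoeff f z₀ n‖ ≤ M / ρ ^ n :=
    norm_taylorCoeff_le (by linarith) (hdiff.diffContOnCl_ball subset_rfl)
      fun z hz => hbound z (Metric.sphere_subset_closedBall hz)
  rw [div_eq_mul_inv]
  refine herror.norm_le_of_bounded ((hasSum_inv_pow_succ (one_lt_pow₀ hρ hR0)).mul_left M)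
    fun m => ?_
  calc ‖taylorCoeff f z₀ (R * (m + 1))‖ ≤ M / ρ ^ (R * (m + 1)) := hcoeff _
    _ = M * ((ρ ^ R) ^ (m + 1))⁻¹ := by rw [pow_mul, div_eq_mul_inv]

/-- Exponential accuracy of the shifted roots-of-unity average: if `f` is
analytic on the closed disk of radius `ρ > 1` around `z₀` and bounded by `M`
there, then the average of `f` over the `R`-th roots of unity shifted by `z₀`
approximates `f z₀` with error at most `M/(ρᴿ − 1)`. -/
theorem stmt_13 (z₀ : ℂ) (ρ : ℝ) (hρ : 1 < ρ) (M : ℝ) (hM : 0 ≤ M)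
    (f : ℂ → ℂ)
    (hf : ∀ z ∈ Metric.closedBall z₀ ρ, AnalyticAt ℂ f z)
    (hbound : ∀ z ∈ Metric.closedBall z₀ ρ, ‖f z‖ ≤ M)
    (R : ℕ) (hR : 1 ≤ R) :
    let ζ : ℂ := Complex.exp (2 * Real.pi * Complex.I / R)
    ‖(1 / (R : ℂ)) * (∑ j ∈ Finset.range R, f (z₀ + ζ ^ j)) - f z₀‖ ≤ M / (ρ ^ R - 1) :=
  stmt_13_general z₀ ρ hρ M f hf hbound R hR
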